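/- arXiv:0808.0868 — 2 statements merged into one kernel-verified Lean document; each statement's English description precedes it below -/
import Mathlib

section
/- Let S be a finite set of proper morphisms and let x ∈ A^ℕ be a primitive S-adic sequence generated by a sequence (σ_i : A_{i+1} → A_i* ; i ∈ ℕ) ∈ S^ℕ and a letter a. Then x is linearly recurrent, and consequently the subshift generated by x is linearly recurrent. -/
namespace DurandLR

variable {A B : Type*}

/-- `u` occurs at position `i` in the one-sided sequence `x`. -/
def OccursAt (x : ℕ → A) (u : List A) (i : ℕ) : Prop :=
  ∀ k : Fin u.length, x (i + (k : ℕ)) = u.get k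

/-- `u` occurs (somewhere) in the one-sided sequence `x`. -/
def Occurs (x : ℕ → A) (u : List A) : Prop := ∃ i, OccursAt x u i

/-- `u` occurs at position `i` in the two-sided sequence `x`. -/
def OccursAtZ (x : ℤ → A) (u : List A) (i : ℤ) : Prop :=
  ∀ k : Fin u.length, x (i + (k : ℕ)) = u.get k

def OccursZ (x : ℤ → A) (u : List A) : Prop := ∃ i, OccursAtZ x u i

/-- The word `u` has exactly `m` occurrences in the finite word `w`. -/
def OccCountEq (u w : List A) (m : ℕ) : Prop :=
  {i : ℕ | u <+: w.drop i}.ncard = m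

/-- `w` is a return word to `u` in the one-sided sequence `x`: `wu` occurs in `x`,
`u` is a prefix of `wu` and `u` has exactly two occurrences in `wu`. -/
def IsReturnWord (x : ℕ → A) (u w : List A) : Prop :=
  Occurs x (w ++ u) ∧ u <+: (w ++ u) ∧ OccCountEq u (w ++ u) 2

/-- `w` is a return word to `u` in the two-sided sequence `x`. -/
def IsReturnWordZ (x : ℤ → A) (u w : List A) : Prop :=
  OccursZ x (w ++ u) ∧ u <+: (w ++ u) ∧ OccCountEq u (w ++ u) 2

/-- `x` is uniformly recurrent: every word occurring in `x` occurs with bounded gaps. -/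
def UniformlyRecurrent (x : ℕ → A) : Prop :=
  ∀ u, Occurs x u → ∃ M : ℕ, ∀ i : ℕ, ∃ j, i ≤ j ∧ j < i + M ∧ OccursAt x u j

def UniformlyRecurrentZ (x : ℤ → A) : Prop :=
  ∀ u, OccursZ x u → ∃ M : ℕ, ∀ i : ℤ, ∃ j : ℤ, i ≤ j ∧ j < i + M ∧ OccursAtZ x u j

/-- `x` is linearly recurrent with constant `K`. -/
def LinearlyRecurrentWith (x : ℕ → A) (K : ℕ) : Prop :=
  UniformlyRecurrent x ∧ ∀ u w, IsReturnWord x u w → w.length ≤ K * u.length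

def LinearlyRecurrent (x : ℕ → A) : Prop := ∃ K, LinearlyRecurrentWith x K

def LinearlyRecurrentZ (x : ℤ → A) : Prop :=
  UniformlyRecurrentZ x ∧ ∃ K : ℕ, ∀ u w, IsReturnWordZ x u w → w.length ≤ K * u.length

/-- The subshift generated by a two-sided sequence `x` : all `z` whose finite subwords
occur in `x`. -/
def SubshiftGenZ (x : ℤ → A) : Set (ℤ → A) := {z | ∀ u, OccursZ z u → OccursZ x u}

/-- The subshift generated by a one-sided sequence `x`. -/
def SubshiftGen (x : ℕ → A) : Set (ℤ → A) := {z | ∀ u, OccursZ z u → Occurs x u}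

/-- A minimal subshift: nonempty and every element generates it. -/
def IsMinimalSubshift (X : Set (ℤ → A)) : Prop :=
  X.Nonempty ∧ ∀ z ∈ X, X = SubshiftGenZ z

/-- A linearly recurrent subshift: minimal and containing an LR sequence. -/
def IsLRSubshift (X : Set (ℤ → A)) : Prop :=
  IsMinimalSubshift X ∧ ∃ x ∈ X, LinearlyRecurrentZ x

def IsPeriodic (z : ℤ → A) : Prop := ∃ p : ℕ, 0 < p ∧ ∀ n : ℤ, z (n + p) = z n

/-- Image of a finite word under a morphism (substitution). -/
def wordMap (σ : A → List B) : List A → List B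
  | [] => []
  | a :: u => σ a ++ wordMap σ u

/-- Composition of two morphisms: `compM σ τ = σ ∘ τ`. -/
def compM (σ τ : A → List A) : A → List A := fun b => wordMap σ (τ b)

/-- Iterate of a morphism: `powM σ n = σ^n`. -/
def powM (σ : A → List A) : ℕ → A → List A
  | 0 => fun b => [b]
  | n + 1 => compM σ (powM σ n)

/-- `chain σ r n = σ_r ∘ σ_{r+1} ∘ ⋯ ∘ σ_{r+n-1}` (the empty composition for `n = 0`). -/
def chain (σ : ℕ → A → List A) (r : ℕ) : ℕ → A → List A
  | 0 => fun b => [b]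
  | n + 1 => fun b => wordMap (chain σ r n) (σ (r + n) b)

/-- The periodic infinite sequence `www⋯` obtained by repeating the word `w`
(with a default letter for the degenerate empty case). -/
def repSeq (w : List A) (d : A) : ℕ → A := fun i => w.getD (i % w.length) d

/-- The prefix of length `n` of the sequence `x`, as a word. -/
def seqTake (x : ℕ → A) (n : ℕ) : List A := (List.range n).map x

/-- `y` is the image of the infinite sequence `z` under the morphism `σ`:
the image of every prefix of `z` is a prefix of `y`. -/
def IsSeqImage (σ : A → List B) (z : ℕ → A) (y : ℕ → B) : Prop :=
  ∀ n, seqTake y (wordMap σ (seqTake z n)).length = wordMap σ (seqTake z n)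

/-- `σ_0 σ_1 ⋯ σ_n (aaa⋯)` converges to `x` in the product topology, where the `n`-th
approximation is the periodic sequence obtained by repeating the word `W n`. -/
def ConvergesTo (W : ℕ → List A) (d : A) (x : ℕ → A) : Prop :=
  ∀ m, ∃ N, ∀ n ≥ N, repSeq (W n) d m = x m

/-- A proper morphism: all images begin with the same letter and end with the same letter. -/
def ProperMorphism (σ : A → List A) : Prop :=
  ∃ l r : A, ∀ b, (σ b).head? = some l ∧ (σ b).getLast? = some r

/-- Primitivity with constant `s₀` of a directive sequence of morphisms
`σ_n : A_{n+1} → A_n^*`: every `b ∈ A_r` occurs in `σ_{r+1} ⋯ σ_{r+s₀} (c)`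
for every `c ∈ A_{r+s₀+1}`. -/
def PrimitiveWith (σ : ℕ → A → List A) (Aseq : ℕ → Set A) (s0 : ℕ) : Prop :=
  ∀ r : ℕ, ∀ b ∈ Aseq r, ∀ c ∈ Aseq (r + s0 + 1), b ∈ chain σ (r + 1) s0 c

/-- The data of an S-adic system: `a` belongs to every alphabet and
`σ_n` maps `A_{n+1}` into words over `A_n`. -/
def SAdicSystem (σ : ℕ → A → List A) (Aseq : ℕ → Set A) (a : A) : Prop :=
  (∀ n, a ∈ Aseq n) ∧ (∀ n, ∀ b ∈ Aseq (n + 1), ∀ c ∈ σ n b, c ∈ Aseq n)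

/-- `x` is the S-adic sequence generated by the directive sequence `σ` and letter `a`:
`σ_0 σ_1 ⋯ σ_n (aaa⋯)` converges to `x`. -/
def GeneratesSAdic (σ : ℕ → A → List A) (Aseq : ℕ → Set A) (a : A) (x : ℕ → A) : Prop :=
  SAdicSystem σ Aseq a ∧ ConvergesTo (fun n => chain σ 0 (n + 1) a) a x

/-- The complexity function `p_x(n)`: the number of distinct words of length `n`
occurring in `x`. -/
noncomputable def complexity (x : ℕ → A) (n : ℕ) : ℕ := {u : List A | u.length = n ∧ Occurs x u}.ncard

/-- Any two successive occurrences of `u` in `x` differ by at most `M`. -/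
def GapsBoundedBy (x : ℕ → A) (u : List A) (M : ℕ) : Prop :=
  ∀ i j, OccursAt x u i → OccursAt x u j → i < j →
    (∀ k, i < k → k < j → ¬ OccursAt x u k) → j - i ≤ M

/-- The finite word `x_{[p,q)}` of a two-sided sequence. -/
def zSeg (x : ℤ → A) (p q : ℤ) : List A := (List.range (q - p).toNat).map fun t => x (p + t)

/-- `w` is a return word to `u.v` in the two-sided sequence `x`: there are two
consecutive occurrences `j < k` of `uv` in `x` with `w = x_{[j+|u|, k+|u|)}`. -/
def IsReturnWordUV (x : ℤ → A) (u v w : List A) : Prop :=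
  ∃ j k : ℤ, OccursAtZ x (u ++ v) j ∧ OccursAtZ x (u ++ v) k ∧ j < k ∧
    (∀ i : ℤ, j < i → i < k → ¬ OccursAtZ x (u ++ v) i) ∧
    w = zSeg x (j + u.length) (k + u.length)

/-- The substitution `σ` on `{a,b,c} = {0,1,2}`: `σ(a)=acb`, `σ(b)=bab`, `σ(c)=cbc`. -/
def sigma3 : Fin 3 → List (Fin 3) := ![[0, 2, 1], [1, 0, 1], [2, 1, 2]]

/-- The substitution `τ` on `{a,b,c} = {0,1,2}`: `τ(a)=abc`, `τ(b)=acb`, `τ(c)=aac`. -/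
def tau3 : Fin 3 → List (Fin 3) := ![[0, 1, 2], [0, 2, 1], [0, 0, 2]]

/-- `rho n = σ τ σ² τ ⋯ σⁿ τ` (identity for `n = 0`). -/
def rho : ℕ → Fin 3 → List (Fin 3)
  | 0 => fun b => [b]
  | n + 1 => compM (rho n) (compM (powM sigma3 (n + 1)) tau3)

/-- `psi n l = σ^{n+2} τ σ^{n+3} τ ⋯ σ^{n+l+1} τ` (identity for `l = 0`). -/
def psi (n : ℕ) : ℕ → Fin 3 → List (Fin 3)
  | 0 => fun b => [b]
  | l + 1 => compM (psi n l) (compM (powM sigma3 (n + 2 + l)) tau3)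

/-- The Sturmian substitution `τ` on `{0,1}`: `τ(0)=0`, `τ(1)=10`. -/
def tau2 : Fin 2 → List (Fin 2) := ![[0], [1, 0]]

/-- The Sturmian substitution `σ` on `{0,1}`: `σ(0)=01`, `σ(1)=1`. -/
def sigma2 : Fin 2 → List (Fin 2) := ![[0, 1], [1]]

/-- `xi i k = τ^{i₁} σ^{i₂} τ^{i₃} ⋯ τ^{i_{2k-1}} σ^{i_{2k}}` (identity for `k = 0`). -/
def xi (i : ℕ → ℕ) : ℕ → Fin 2 → List (Fin 2)
  | 0 => fun b => [b]
  | k + 1 => compM (xi i k) (compM (powM tau2 (i (2 * k + 1))) (powM sigma2 (i (2 * k + 2))))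

/-- `a : ℕ → ℕ` gives (from index 1 on) the continued fraction expansion
`α = [0; a₁, a₂, a₃, …]`, expressed through the Gauss map. -/
def IsCFExpansion (α : ℝ) (a : ℕ → ℕ) : Prop :=
  ∃ β : ℕ → ℝ, β 0 = α ∧ ∀ n : ℕ,
    0 < β n ∧ β n < 1 ∧ (a (n + 1) : ℤ) = ⌊1 / β n⌋ ∧ β (n + 1) = 1 / β n - ⌊1 / β n⌋

/-!
Write `τ_m = σ_0 ⋯ σ_{m-1}` and let `L` bound the lengths of the images of the finitely many
morphisms in `S`. The alphabets `A_m` increase, hence stabilise, and from then on primitivity makes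
every `τ_m(b)` a factor of every `τ_{m+s₀}(c)`; in particular all `|τ_m(c)|` agree up to a factor
`L^{s₀}`. Given a factor `u` of `x`, take the least (large) level `m` with `|u| ≤ |τ_m(b)|` for all
`b`. Cutting `x` into blocks `τ_m(b)`, the word `u` lies within two consecutive blocks; since the
morphisms are proper, these either come from a single `τ_{m+1}(f)` or are `τ_m(r) τ_m(l)`, where `r`
and `l` are the common last and first letters of the images of `σ_m`. Either way `u` is a factor of
`τ_N(c) τ_N(c')` for all letters `c, c'` of level `N = m + 1 + s₀`, so it occurs in every window of
length `3 max_c |τ_N(c)|`, which is `O(|u|)` by the minimality of `m`. This is linear recurrence.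
If the words `τ_m(a)` stay bounded, `x` is periodic instead. Finally, an ultrafilter limit of shifts
of `x` is a point of the subshift, and it inherits linear recurrence from `x`.
-/

theorem wordMap_eq_flatMap (g : A → List B) (v : List A) : wordMap g v = v.flatMap g := by
  induction v with
  | nil => rfl
  | cons b v ih => simp [wordMap, ih]

theorem infix_flatMap_of_mem (g : A → List B) {b : A} {v : List A} (h : b ∈ v) :
    g b <:+: v.flatMap g := by
  simpa using ((List.singleton_infix_iff b v).2 h).flatMap g

theorem length_flatMap_le (g : A → List B) {v : List A} {M : ℕ}
    (h : ∀ b ∈ v, (g b).length ≤ M) : (v.flatMap g).length ≤ v.length * M := by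
  rw [List.length_flatMap]
  simpa using List.sum_le_card_nsmul (v.map fun b => (g b).length) M (by simpa using h)

theorem infix_append_of_suffix_of_prefix {s t v w : List A} (hs : s <:+ v) (ht : t <+: w) :
    s ++ t <:+: v ++ w := by
  obtain ⟨p, rfl⟩ := hs
  obtain ⟨q, rfl⟩ := ht
  exact ⟨p, q, by simp⟩

theorem infix_append_cases {u v w : List A} (h : u <:+: v ++ w) :
    u <:+: v ∨ u <:+: w ∨ ∃ s t, u = s ++ t ∧ s <:+ v ∧ t <+: w := by
  obtain ⟨p, q, e⟩ := h
  rcases List.append_eq_append_iff.1 e with ⟨s, hv, -⟩ | ⟨t, hpu, hw⟩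
  · exact .inl ⟨p, s, hv.symm⟩
  rcases List.append_eq_append_iff.1 hpu with ⟨s, hv, hu⟩ | ⟨s, -, ht⟩
  · exact .inr (.inr ⟨s, t, hu, ⟨p, hv.symm⟩, ⟨q, hw.symm⟩⟩)
  · exact .inr (.inl ⟨s, q, by rw [hw, ht]⟩)

theorem infix_flatMap_cases (g : A → List B) {u : List B} (hu : u ≠ []) {V : List A}
    (hlen : ∀ b ∈ V, u.length ≤ (g b).length) (h : u <:+: V.flatMap g) :
    (∃ b ∈ V, u <:+: g b) ∨ ∃ d e, [d, e] <:+: V ∧ u <:+: g d ++ g e := by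
  induction V with
  | nil => exact absurd (List.eq_nil_of_infix_nil h) hu
  | cons b V ih =>
    rw [List.flatMap_cons] at h
    rcases infix_append_cases h with h | h | ⟨s, t, rfl, hs, ht⟩
    · exact .inl ⟨b, by simp, h⟩
    · rcases ih (fun c hc => hlen c (by simp [hc])) h with ⟨c, hc, h⟩ | ⟨d, e, hde, h⟩
      · exact .inl ⟨c, by simp [hc], h⟩
      · exact .inr ⟨d, e, hde.trans (List.suffix_cons b V).isInfix, h⟩
    · cases V with
      | nil =>
        obtain rfl : t = [] := by simpa using ht
        exact .inl ⟨b, by simp, by simpa using hs.isInfix⟩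
      | cons c V =>
        have htc : t <+: g c := by
          rw [List.flatMap_cons] at ht
          refine List.prefix_of_prefix_length_le ht (List.prefix_append _ _) ?_
          have := hlen c (by simp)
          simp only [List.length_append] at this
          omega
        exact .inr ⟨b, c, ⟨[], V, rfl⟩, infix_append_of_suffix_of_prefix hs htc⟩

theorem pair_infix_flatMap_cases {σ : A → List A} {l r : A}
    (hσ : ∀ b, (σ b).head? = some l ∧ (σ b).getLast? = some r) {d e : A} {V : List A}
    (h : [d, e] <:+: V.flatMap σ) : (∃ f ∈ V, [d, e] <:+: σ f) ∨ (d = r ∧ e = l) := by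
  induction V with
  | nil => simp at h
  | cons f V ih =>
    rw [List.flatMap_cons] at h
    rcases infix_append_cases h with h | h | ⟨s, t, hst, hs, ht⟩
    · exact .inl ⟨f, by simp, h⟩
    · exact (ih h).imp (fun ⟨f', hf', h⟩ => ⟨f', by simp [hf'], h⟩) id
    rcases s with _ | ⟨d', _ | ⟨e', _ | ⟨_, _⟩⟩⟩ <;> simp at hst
    · exact (ih (hst ▸ ht).isInfix).imp (fun ⟨f', hf', h⟩ => ⟨f', by simp [hf'], h⟩) id
    · obtain ⟨rfl, rfl⟩ := hst
      refine .inr ⟨?_, ?_⟩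
      · obtain ⟨p, hp⟩ := hs
        simpa [← hp] using (hσ f).2
      · cases V with
        | nil => simp at ht
        | cons f' V =>
          obtain ⟨q, hq⟩ := List.head?_eq_some_iff.1 (hσ f').1
          simpa [hq] using ht
    · obtain ⟨rfl, rfl, rfl⟩ := hst
      exact .inl ⟨f, by simp, hs.isInfix⟩

theorem infix_flatMap_flatMap_of_proper {σ : A → List A} {l r : A}
    (hσ : ∀ b, (σ b).head? = some l ∧ (σ b).getLast? = some r) (g : A → List B) {u : List B}
    (hu : u ≠ []) {V : List A} (hlen : ∀ b ∈ V.flatMap σ, u.length ≤ (g b).length)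
    (h : u <:+: (V.flatMap σ).flatMap g) :
    (∃ f ∈ V, u <:+: (σ f).flatMap g) ∨ u <:+: g r ++ g l := by
  rcases infix_flatMap_cases g hu hlen h with ⟨b, hb, h⟩ | ⟨d, e, hde, h⟩
  · obtain ⟨f, hf, hbf⟩ := List.mem_flatMap.1 hb
    exact .inl ⟨f, hf, h.trans (infix_flatMap_of_mem g hbf)⟩
  · rcases pair_infix_flatMap_cases hσ hde with ⟨f, hf, hdef⟩ | ⟨rfl, rfl⟩
    · exact .inl ⟨f, hf, h.trans (by simpa using hdef.flatMap g)⟩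
    · exact .inr h

theorem infix_flatMap_flatMap_append_of_proper {σ : A → List A} {l r : A}
    (hσ : ∀ b, (σ b).head? = some l ∧ (σ b).getLast? = some r) (g : A → List B) {V V' : List A}
    (hV : V ≠ []) (hV' : V' ≠ []) :
    g r ++ g l <:+: (V.flatMap σ).flatMap g ++ (V'.flatMap σ).flatMap g := by
  obtain ⟨W, w, rfl⟩ : ∃ W w, V = W ++ [w] :=
    ⟨_, _, (List.dropLast_append_getLast hV).symm⟩
  obtain ⟨w', W', rfl⟩ := List.exists_cons_of_ne_nil hV'
  obtain ⟨p, hp⟩ := List.getLast?_eq_some_iff.1 (hσ w).2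
  obtain ⟨q, hq⟩ := List.head?_eq_some_iff.1 (hσ w').1
  exact ⟨(W.flatMap σ ++ p).flatMap g, (q ++ W'.flatMap σ).flatMap g, by simp [hp, hq]⟩

theorem exists_prefix_drop_flatMap (g : A → List B) (u : List B) {P : ℕ} (hP : 0 < P) {V : List A}
    (hlen : ∀ b ∈ V, (g b).length ≤ P)
    (hpair : ∀ b ∈ V, ∀ b' ∈ V, u <:+: g b ++ g b') {i : ℕ}
    (hi : i + 3 * P ≤ (V.flatMap g).length) :
    ∃ j, i ≤ j ∧ j + u.length ≤ i + 3 * P ∧ u <+: (V.flatMap g).drop j := by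
  induction V generalizing i with
  | nil => simp at hi; omega
  | cons b V ih =>
    rw [List.flatMap_cons, List.length_append] at hi
    rcases le_or_gt (g b).length i with hbi | hbi
    · obtain ⟨j, hij, hj, h⟩ := ih (fun c hc => hlen c (by simp [hc]))
        (fun c hc c' hc' => hpair c (by simp [hc]) c' (by simp [hc'])) (i := i - (g b).length)
        (by omega)
      refine ⟨(g b).length + j, by omega, by omega, ?_⟩
      rwa [List.flatMap_cons, List.drop_length_add_append]
    · -- the window contains the two whole blocks that follow `g b`
      have hb := hlen b (by simp)
      rcases V with _ | ⟨c, _ | ⟨c', V⟩⟩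
      · simp at hi; omega
      · have hc := hlen c (by simp)
        simp at hi; omega
      obtain ⟨p, q, hpq⟩ := hpair c (by simp) c' (by simp)
      have hlen' := congrArg List.length hpq
      have hc := hlen c (by simp)
      have hc' := hlen c' (by simp)
      simp only [List.length_append] at hlen'
      refine ⟨(g b).length + p.length, by omega, by omega, ?_⟩
      rw [List.flatMap_cons, List.drop_length_add_append, List.flatMap_cons, List.flatMap_cons,
        ← List.append_assoc, ← hpq]
      simp

@[simp] theorem length_seqTake (x : ℕ → A) (t : ℕ) : (seqTake x t).length = t := by
  simp [seqTake]

theorem seqTake_prefix_iff {x : ℕ → A} {t : ℕ} {w : List A} :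
    seqTake x t <+: w ↔ ∀ i < t, w[i]? = some (x i) := by
  simp [List.prefix_iff_getElem?, seqTake]

theorem occursAt_iff_prefix_drop {x : ℕ → A} {t j : ℕ} {u w : List A} (hw : seqTake x t <+: w)
    (hj : j + u.length ≤ t) : OccursAt x u j ↔ u <+: w.drop j := by
  rw [seqTake_prefix_iff] at hw
  simp only [OccursAt, List.prefix_iff_getElem?, List.getElem?_drop, Fin.forall_iff,
    List.get_eq_getElem]
  refine forall₂_congr fun k hk => ?_
  rw [hw _ (by omega), Option.some_inj, eq_comm]

theorem OccursAt.of_prefix {x : ℕ → A} {u w : List A} {i : ℕ} (h : OccursAt x w i)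
    (hu : u <+: w) : OccursAt x u i := fun k => by
  simpa [hu.getElem] using h ⟨k, k.2.trans_le hu.length_le⟩

theorem OccursAt.prefix_drop {x : ℕ → A} {u w : List A} {i j : ℕ} (hw : OccursAt x w i)
    (hu : OccursAt x u j) (hij : i ≤ j) (hj : j + u.length ≤ i + w.length) :
    u <+: w.drop (j - i) := by
  rw [List.prefix_iff_getElem]
  refine ⟨by simp; omega, fun k hk => ?_⟩
  have := hw ⟨j - i + k, by omega⟩
  simp only [List.get_eq_getElem] at this
  rw [List.getElem_drop, ← this, show i + (j - i + k) = j + k by omega]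
  simpa using (hu ⟨k, hk⟩).symm

theorem not_occCountEq_two {u v : List A} {p q r : ℕ} (hpq : p < q) (hqr : q < r)
    (hp : u <+: v.drop p) (hq : u <+: v.drop q) (hr : u <+: v.drop r) : ¬ OccCountEq u v 2 := by
  rw [OccCountEq, Set.ncard_eq_two]
  rintro ⟨a, b, -, hab⟩
  have hp' : p ∈ ({a, b} : Set ℕ) := hab ▸ hp
  have hq' : q ∈ ({a, b} : Set ℕ) := hab ▸ hq
  have hr' : r ∈ ({a, b} : Set ℕ) := hab ▸ hr
  simp only [Set.mem_insert_iff, Set.mem_singleton_iff] at hp' hq' hr'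
  omega

def LinearlySyndetic (x : ℕ → A) (K : ℕ) : Prop :=
  ∀ u, u ≠ [] → Occurs x u → ∀ i, ∃ j, i ≤ j ∧ j + u.length ≤ i + K * u.length ∧ OccursAt x u j

theorem LinearlySyndetic.linearlyRecurrentWith {x : ℕ → A} {K : ℕ} (h : LinearlySyndetic x K) :
    LinearlyRecurrentWith x K := by
  refine ⟨fun u hu => ?_, fun u w ⟨⟨i, hocc⟩, hpre, hcount⟩ => ?_⟩
  · rcases eq_or_ne u [] with rfl | hne
    · exact ⟨1, fun i => ⟨i, le_rfl, by omega, fun k => k.elim0⟩⟩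
    refine ⟨K * u.length + 1, fun i => ?_⟩
    obtain ⟨j, hij, hj, hocc⟩ := h u hne hu i
    exact ⟨j, hij, by have := List.length_pos_of_ne_nil hne; omega, hocc⟩
  have hne : u ≠ [] := by
    rintro rfl
    exact not_occCountEq_two (p := 0) (q := 1) (r := 2) (by omega) (by omega)
      (List.nil_prefix) (List.nil_prefix) (List.nil_prefix) hcount
  have hu1 := List.length_pos_of_ne_nil hne
  obtain ⟨j, hij, hj, hu⟩ := h u hne ⟨i, hocc.of_prefix hpre⟩ (i + 1)
  -- otherwise the next occurrence of `u` after `i` would be a third one inside `w ++ u`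
  by_contra! hlong
  refine not_occCountEq_two (p := 0) (q := j - i) (r := w.length) (by omega) (by omega)
    (by simpa using hpre) (hocc.prefix_drop hu (by omega) (by simp; omega)) (by simp) hcount

theorem occursAt_add_mul_iff {x : ℕ → A} {p : ℕ} (hper : Function.Periodic x p) (u : List A)
    (j c : ℕ) : OccursAt x u (j + c * p) ↔ OccursAt x u j := by
  have hc : Function.Periodic x (c * p) := by simpa using hper.nat_mul c
  simp only [OccursAt, add_right_comm j (c * p), hc _]

theorem linearlySyndetic_of_periodic {x : ℕ → A} {p : ℕ} (hp : 0 < p)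
    (hper : Function.Periodic x p) : LinearlySyndetic x (2 * p + 1) := by
  rintro u hu ⟨j, hj⟩ i
  have hres : OccursAt x u (j % p) := by
    rwa [← occursAt_add_mul_iff hper u _ (j / p), Nat.mod_add_div']
  refine ⟨j % p + (i / p + 1) * p, ?_, ?_, (occursAt_add_mul_iff hper u _ _).2 hres⟩
  · have := Nat.lt_div_mul_add (a := i) hp
    linarith [Nat.zero_le (j % p)]
  · have h1 := Nat.mod_lt j hp
    have h2 := Nat.div_mul_le_self i p
    have h3 := Nat.le_mul_of_pos_right (2 * p) (List.length_pos_of_ne_nil hu)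
    nlinarith

@[simp] theorem length_zSeg_add (z : ℤ → A) (i : ℤ) (n : ℕ) : (zSeg z i (i + n)).length = n := by
  simp [zSeg]

theorem occursAtZ_zSeg_add (z : ℤ → A) (i : ℤ) (n : ℕ) : OccursAtZ z (zSeg z i (i + n)) i := by
  rintro ⟨k, hk⟩
  simp [zSeg, ← List.map_eq_flatMap]

theorem OccursAtZ.add_of_occursAt {z : ℤ → A} {x : ℕ → A} {u w : List A} {i : ℤ} {q d : ℕ}
    (hw : OccursAtZ z w i) (hwx : OccursAt x w q) (hu : OccursAt x u (q + d))
    (hd : d + u.length ≤ w.length) : OccursAtZ z u (i + d) := fun k => by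
  have h1 := hw ⟨d + k, by omega⟩
  have h2 := hwx ⟨d + k, by omega⟩
  have h3 := hu k
  simp only [List.get_eq_getElem, Nat.cast_add, ← add_assoc] at h1 h2 h3 ⊢
  rw [h1, ← h2, h3]

theorem UniformlyRecurrent.exists_occursAtZ {x : ℕ → A} (hx : UniformlyRecurrent x) {z : ℤ → A}
    (hz : z ∈ SubshiftGen x) {u : List A} (hu : Occurs x u) :
    ∃ M : ℕ, ∀ i : ℤ, ∃ d < M, OccursAtZ z u (i + d) := by
  obtain ⟨M, hM⟩ := hx u hu
  refine ⟨M, fun i => ?_⟩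
  obtain ⟨q, hq⟩ := hz _ ⟨i, occursAtZ_zSeg_add z i (M + u.length)⟩
  obtain ⟨j, hqj, hjM, hj⟩ := hM q
  refine ⟨j - q, by omega, (occursAtZ_zSeg_add z i _).add_of_occursAt hq ?_
    (by rw [length_zSeg_add]; omega)⟩
  rwa [Nat.add_sub_cancel' hqj]

theorem UniformlyRecurrent.occursZ_iff {x : ℕ → A} (hx : UniformlyRecurrent x) {z : ℤ → A}
    (hz : z ∈ SubshiftGen x) (u : List A) : OccursZ z u ↔ Occurs x u := by
  refine ⟨hz u, fun hu => ?_⟩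
  obtain ⟨M, hM⟩ := hx.exists_occursAtZ hz hu
  obtain ⟨d, -, h⟩ := hM 0
  exact ⟨_, h⟩

theorem UniformlyRecurrent.uniformlyRecurrentZ {x : ℕ → A} (hx : UniformlyRecurrent x)
    {z : ℤ → A} (hz : z ∈ SubshiftGen x) : UniformlyRecurrentZ z := by
  intro u hu
  obtain ⟨M, hM⟩ := hx.exists_occursAtZ hz (hz u hu)
  refine ⟨M, fun i => ?_⟩
  obtain ⟨d, hd, h⟩ := hM i
  exact ⟨i + d, by omega, by omega, h⟩

theorem UniformlyRecurrent.subshiftGen_eq {x : ℕ → A} (hx : UniformlyRecurrent x) {z : ℤ → A}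
    (hz : z ∈ SubshiftGen x) : SubshiftGen x = SubshiftGenZ z := by
  ext y
  simp only [SubshiftGen, SubshiftGenZ, Set.mem_ofPred_eq, hx.occursZ_iff hz]

theorem subshiftGen_nonempty [Finite A] (x : ℕ → A) : (SubshiftGen x).Nonempty := by
  let U : Ultrafilter ℕ := Ultrafilter.of Filter.atTop
  have hlim (k : ℤ) : ∃ b, ∀ᶠ q : ℕ in (U : Filter ℕ), x (k + q).toNat = b := by
    obtain ⟨b, hb⟩ := (U.map fun q : ℕ => x (k + q).toNat).eq_pure_of_finite
    have hmem : {b} ∈ U.map fun q : ℕ => x (k + q).toNat := by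
      rw [hb]
      exact Ultrafilter.mem_pure.2 rfl
    exact ⟨b, Ultrafilter.mem_map.1 hmem⟩
  choose z hz using hlim
  refine ⟨z, fun u ⟨i, hi⟩ => ?_⟩
  have hev : ∀ᶠ q : ℕ in (U : Filter ℕ), i.natAbs ≤ q ∧
      ∀ k : Fin u.length, x (i + k + q).toNat = z (i + k) :=
    ((Filter.eventually_ge_atTop _).filter_mono (Ultrafilter.of_le _)).and
      (Filter.eventually_all.2 fun k => hz _)
  obtain ⟨q, hq, hzq⟩ := hev.exists
  refine ⟨(i + q).toNat, fun k => ?_⟩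
  rw [← hi k, ← hzq k]
  congr 1
  omega

theorem LinearlyRecurrentWith.isLRSubshift [Finite A] {x : ℕ → A} {K : ℕ}
    (h : LinearlyRecurrentWith x K) : IsLRSubshift (SubshiftGen x) := by
  obtain ⟨z, hz⟩ := subshiftGen_nonempty x
  refine ⟨⟨⟨z, hz⟩, fun y hy => h.1.subshiftGen_eq hy⟩, z, hz, h.1.uniformlyRecurrentZ hz, K, ?_⟩
  rintro u w ⟨hocc, hpre, hcount⟩
  exact h.2 u w ⟨hz _ hocc, hpre, hcount⟩

theorem ProperMorphism.ne_nil {σ : A → List A} (h : ProperMorphism σ) (b : A) : σ b ≠ [] := by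
  obtain ⟨l, r, hlr⟩ := h
  intro hb
  simpa [hb] using (hlr b).1

theorem exists_length_le_of_finite [Finite A] {S : Set (A → List B)} (hS : S.Finite) :
    ∃ L, ∀ σ ∈ S, ∀ b, (σ b).length ≤ L := by
  obtain ⟨L, hL⟩ := (hS.image2 (fun σ b => (σ b).length) Set.finite_univ).bddAbove
  exact ⟨L, fun σ hσ b => hL (Set.mem_image2_of_mem hσ (Set.mem_univ b))⟩

theorem exists_ge_le_of_unbounded {f : ℕ → ℕ} (hf : ∀ B, ∃ k, B ≤ f k) (B K₀ : ℕ) :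
    ∃ k ≥ K₀, B ≤ f k := by
  obtain ⟨k, hk⟩ := hf (max B ((Finset.range K₀).sup f + 1))
  refine ⟨k, ?_, le_of_max_le_left hk⟩
  by_contra! hlt
  have := Finset.le_sup (f := f) (Finset.mem_range.2 hlt)
  have := le_of_max_le_right hk
  omega

theorem ConvergesTo.exists_ge_seqTake_prefix {W : ℕ → List A} {d : A} {x : ℕ → A}
    (h : ConvergesTo W d x) (hW : ∀ B, ∃ k, B ≤ (W k).length) (t K₀ : ℕ) :
    ∃ k ≥ K₀, seqTake x t <+: W k := by
  choose N hN using h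
  obtain ⟨k, hk, hlen⟩ := exists_ge_le_of_unbounded hW t (max K₀ ((Finset.range t).sup N))
  refine ⟨k, le_of_max_le_left hk, seqTake_prefix_iff.2 fun i hi => ?_⟩
  rw [← hN i k ((Finset.le_sup (Finset.mem_range.2 hi)).trans (le_of_max_le_right hk)), repSeq,
    Nat.mod_eq_of_lt (by omega), List.getD_eq_getElem?_getD, List.getElem?_eq_getElem (by omega)]
  rfl

theorem ConvergesTo.periodic_of_bounded [Finite A] {W : ℕ → List A} {d : A} {x : ℕ → A}
    (h : ConvergesTo W d x) (hne : ∀ k, W k ≠ []) {B : ℕ} (hB : ∀ k, (W k).length < B) :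
    ∃ p, 0 < p ∧ Function.Periodic x p := by
  obtain ⟨w, hw⟩ : ∃ w, {k | W k = w}.Infinite := by
    have : Finite {w : List A // w.length < B} := (List.finite_length_lt A B).to_subtype
    obtain ⟨⟨w, _⟩, hw⟩ :=
      Finite.exists_infinite_fiber fun k => (⟨W k, hB k⟩ : {w : List A // w.length < B})
    refine ⟨w, Set.infinite_coe_iff.1 ?_⟩
    convert hw using 3
    ext k
    simp [Subtype.ext_iff]
  have hx : x = repSeq w d := funext fun m => by
    obtain ⟨N, hN⟩ := h m
    obtain ⟨k, hk, hkN⟩ := hw.exists_gt N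
    rw [← hN k hkN.le, hk]
  obtain ⟨k, hk⟩ := hw.nonempty
  refine ⟨w.length, List.length_pos_of_ne_nil (hk ▸ hne k), fun m => ?_⟩
  simp [hx, repSeq]

theorem chain_succ (σ : ℕ → A → List A) (r n : ℕ) (b : A) :
    chain σ r (n + 1) b = (σ (r + n) b).flatMap (chain σ r n) :=
  wordMap_eq_flatMap _ _

theorem chain_add (σ : ℕ → A → List A) (r m k : ℕ) (b : A) :
    chain σ r (m + k) b = (chain σ (r + m) k b).flatMap (chain σ r m) := by
  induction k generalizing b with
  | zero => simp [chain]
  | succ k ih =>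
    rw [← add_assoc, chain_succ, chain_succ, List.flatMap_assoc, ← add_assoc]
    exact congrArg (List.flatMap · _) (funext ih)

theorem chain_zero_add_one_add (σ : ℕ → A → List A) (m j : ℕ) (b : A) :
    chain σ 0 (m + 1 + j) b = ((chain σ (m + 1) j b).flatMap (σ m)).flatMap (chain σ 0 m) := by
  rw [chain_add, zero_add, List.flatMap_assoc]
  exact congrArg (List.flatMap · _) (funext fun c => by rw [chain_succ, zero_add])

theorem chain_ne_nil {σ : ℕ → A → List A} (hne : ∀ n b, σ n b ≠ []) (r k : ℕ) (b : A) :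
    chain σ r k b ≠ [] := by
  induction k generalizing b with
  | zero => simp [chain]
  | succ k ih =>
    obtain ⟨c, hc⟩ := List.exists_mem_of_ne_nil _ (hne (r + k) b)
    rw [chain_succ, Ne, List.flatMap_eq_nil_iff]
    exact fun h => ih c (h c hc)

theorem length_chain_le_pow {σ : ℕ → A → List A} {L : ℕ} (hL : ∀ n b, (σ n b).length ≤ L)
    (r k : ℕ) (b : A) : (chain σ r k b).length ≤ L ^ k := by
  induction k generalizing b with
  | zero => simp [chain]
  | succ k ih =>
    rw [chain_succ, pow_succ']
    exact (length_flatMap_le _ fun c _ => ih c).trans (Nat.mul_le_mul_right _ (hL _ _))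

theorem mem_of_mem_chain {σ : ℕ → A → List A} {Aseq : ℕ → Set A}
    (hmaps : ∀ n, ∀ b ∈ Aseq (n + 1), ∀ c ∈ σ n b, c ∈ Aseq n) {r k : ℕ} {b c : A}
    (hb : b ∈ Aseq (r + k)) (hc : c ∈ chain σ r k b) : c ∈ Aseq r := by
  induction k generalizing b with
  | zero => simp_all [chain]
  | succ k ih =>
    obtain ⟨d, hd, hc⟩ := List.mem_flatMap.1 (chain_succ σ r k b ▸ hc)
    exact ih (hmaps _ b hb d hd) hc

section SAdic

variable {σ : ℕ → A → List A} {Aseq : ℕ → Set A} {a : A} {s0 L : ℕ}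

theorem SAdicSystem.monotone (hsys : SAdicSystem σ Aseq a) (hprim : PrimitiveWith σ Aseq s0) :
    Monotone Aseq :=
  monotone_nat_of_le_succ fun r b hb =>
    mem_of_mem_chain hsys.2 (hsys.1 _) (hprim r b hb a (hsys.1 _))

theorem PrimitiveWith.infix_chain (hprim : PrimitiveWith σ Aseq s0) {r : ℕ}
    (hr : Aseq (r + 1) ⊆ Aseq r) {e c : A} (he : e ∈ Aseq (r + 1))
    (hc : c ∈ Aseq (r + 1 + s0)) : chain σ 0 (r + 1) e <:+: chain σ 0 (r + 1 + s0) c := by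
  rw [chain_add σ 0 (r + 1) s0 c, zero_add]
  exact infix_flatMap_of_mem _ (hprim r e (hr he) c (by rwa [add_right_comm]))

theorem PrimitiveWith.length_chain_le_mul (hprim : PrimitiveWith σ Aseq s0)
    (hmaps : ∀ n, ∀ b ∈ Aseq (n + 1), ∀ c ∈ σ n b, c ∈ Aseq n) (hL : ∀ n b, (σ n b).length ≤ L)
    {r : ℕ} (hr : Aseq (r + 1) ⊆ Aseq r) {b c : A} (hb : b ∈ Aseq (r + 1 + s0))
    (hc : c ∈ Aseq (r + 1 + s0)) :
    (chain σ 0 (r + 1 + s0) b).length ≤ L ^ s0 * (chain σ 0 (r + 1 + s0) c).length := by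
  rw [chain_add σ 0 (r + 1) s0 b, zero_add]
  calc _ ≤ (chain σ (r + 1) s0 b).length * (chain σ 0 (r + 1 + s0) c).length :=
        length_flatMap_le _ fun e he =>
          (hprim.infix_chain hr (mem_of_mem_chain hmaps hb he) hc).length_le
    _ ≤ _ := Nat.mul_le_mul_right _ (length_chain_le_pow hL _ _ _)

theorem length_chain_add_le (hmaps : ∀ n, ∀ b ∈ Aseq (n + 1), ∀ c ∈ σ n b, c ∈ Aseq n)
    (hL : ∀ n b, (σ n b).length ≤ L) {m M : ℕ}
    (hM : ∀ e ∈ Aseq m, (chain σ 0 m e).length ≤ M) (k : ℕ) {b : A} (hb : b ∈ Aseq (m + k)) :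
    (chain σ 0 (m + k) b).length ≤ L ^ k * M := by
  rw [chain_add, zero_add]
  exact (length_flatMap_le _ fun e he => hM e (mem_of_mem_chain hmaps hb he)).trans
    (Nat.mul_le_mul_right _ (length_chain_le_pow hL _ _ _))

theorem exists_level_forall_le_length (hsys : SAdicSystem σ Aseq a)
    (hprim : PrimitiveWith σ Aseq s0) (hL : ∀ n b, (σ n b).length ≤ L) (hL0 : 0 < L)
    (hunb : ∀ B, ∃ k, B ≤ (chain σ 0 (k + 1) a).length) {n₀ : ℕ}
    (hstab : ∀ r ≥ n₀, Aseq (r + 1) ⊆ Aseq r) (B : ℕ) :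
    ∃ m ≥ n₀ + s0 + 1, ∀ b ∈ Aseq m, B ≤ (chain σ 0 m b).length := by
  obtain ⟨k, hk, hB⟩ := exists_ge_le_of_unbounded hunb (L ^ s0 * B) (n₀ + s0)
  obtain ⟨r, rfl⟩ : ∃ r, k = r + s0 := ⟨k - s0, by omega⟩
  refine ⟨r + 1 + s0, by omega, fun b hb => ?_⟩
  rw [add_right_comm] at hB
  have := hprim.length_chain_le_mul hsys.2 hL (hstab r (by omega)) (hsys.1 _) hb
  exact Nat.le_of_mul_le_mul_left (hB.trans this) (by positivity)

theorem exists_level_length_bounds (hsys : SAdicSystem σ Aseq a) (hprim : PrimitiveWith σ Aseq s0)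
    (hL : ∀ n b, (σ n b).length ≤ L) (hL0 : 0 < L)
    (hunb : ∀ B, ∃ k, B ≤ (chain σ 0 (k + 1) a).length) {n₀ : ℕ}
    (hstab : ∀ r ≥ n₀, Aseq (r + 1) ⊆ Aseq r) {u : List A} (hu : u ≠ []) :
    ∃ m ≥ n₀, (∀ b ∈ Aseq m, u.length ≤ (chain σ 0 m b).length) ∧
      ∀ b ∈ Aseq (m + 1 + s0), (chain σ 0 (m + 1 + s0) b).length ≤
        (L ^ (2 * s0 + 2) + L ^ (n₀ + 2 * s0 + 2)) * u.length := by
  classical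
  have hex := exists_level_forall_le_length hsys hprim hL hL0 hunb hstab u.length
  obtain ⟨m, ⟨hm, hshort⟩, hmin⟩ : ∃ m, (m ≥ n₀ + s0 + 1 ∧
      ∀ b ∈ Aseq m, u.length ≤ (chain σ 0 m b).length) ∧ ∀ m' < m, ¬ (m' ≥ n₀ + s0 + 1 ∧
      ∀ b ∈ Aseq m', u.length ≤ (chain σ 0 m' b).length) :=
    ⟨Nat.find hex, Nat.find_spec hex, fun _ => Nat.find_min hex⟩
  refine ⟨m, by omega, hshort, fun b hb => ?_⟩
  have hu1 := List.length_pos_of_ne_nil hu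
  rcases hm.eq_or_lt with rfl | hlt
  · calc _ ≤ L ^ (n₀ + s0 + 1 + 1 + s0) := length_chain_le_pow hL _ _ _
      _ = L ^ (n₀ + 2 * s0 + 2) * 1 := by ring_nf
      _ ≤ _ := Nat.mul_le_mul (Nat.le_add_left _ _) hu1
  obtain ⟨r, rfl⟩ : ∃ r, m = r + 1 + s0 + 1 := ⟨m - s0 - 2, by omega⟩
  obtain ⟨c, hc, hcu⟩ : ∃ c ∈ Aseq (r + 1 + s0), (chain σ 0 (r + 1 + s0) c).length < u.length := by
    have := hmin (r + 1 + s0) (by omega)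
    push Not at this
    exact this (by omega)
  have hprev : ∀ e ∈ Aseq (r + 1 + s0), (chain σ 0 (r + 1 + s0) e).length ≤ L ^ s0 * u.length :=
    fun e he => (hprim.length_chain_le_mul hsys.2 hL (hstab r (by omega)) he hc).trans
      (Nat.mul_le_mul_left _ hcu.le)
  rw [show r + 1 + s0 + 1 + 1 + s0 = r + 1 + s0 + (s0 + 2) by omega] at hb ⊢
  calc _ ≤ L ^ (s0 + 2) * (L ^ s0 * u.length) := length_chain_add_le hsys.2 hL hprev _ hb
    _ = L ^ (2 * s0 + 2) * u.length := by ring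
    _ ≤ _ := Nat.mul_le_mul_right _ (Nat.le_add_right _ _)

theorem infix_chain_append_chain (hsys : SAdicSystem σ Aseq a) (hprim : PrimitiveWith σ Aseq s0)
    (hσ : ∀ n, ProperMorphism (σ n)) {m k : ℕ} (hm : Aseq (m + 1) ⊆ Aseq m) (hmk : m ≤ k)
    {u : List A} (hu : u ≠ []) (hshort : ∀ b ∈ Aseq m, u.length ≤ (chain σ 0 m b).length)
    (hsub : u <:+: chain σ 0 (k + 1) a) {c : A} (hc : c ∈ Aseq (m + 1 + s0)) (c' : A) :
    u <:+: chain σ 0 (m + 1 + s0) c ++ chain σ 0 (m + 1 + s0) c' := by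
  obtain ⟨l, r, hlr⟩ := hσ m
  obtain ⟨j, rfl⟩ : ∃ j, k = m + j := ⟨k - m, by omega⟩
  rw [add_right_comm, chain_zero_add_one_add] at hsub
  have hlen : ∀ b ∈ (chain σ (m + 1) j a).flatMap (σ m),
      u.length ≤ (chain σ 0 m b).length := fun b hb => by
    obtain ⟨f, hf, hbf⟩ := List.mem_flatMap.1 hb
    exact hshort b (hsys.2 m f (mem_of_mem_chain hsys.2 (hsys.1 _) hf) b hbf)
  rcases infix_flatMap_flatMap_of_proper hlr _ hu hlen hsub with ⟨f, hf, hsub⟩ | hsub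
  · have hfc := hprim.infix_chain hm (mem_of_mem_chain hsys.2 (hsys.1 _) hf) hc
    rw [chain_succ σ 0 m f, zero_add] at hfc
    exact (hsub.trans hfc).trans List.infix_append_left
  · have hne : ∀ n b, σ n b ≠ [] := fun n => (hσ n).ne_nil
    rw [chain_zero_add_one_add, chain_zero_add_one_add]
    exact hsub.trans (infix_flatMap_flatMap_append_of_proper hlr _ (chain_ne_nil hne _ _ _)
      (chain_ne_nil hne _ _ _))

theorem exists_occursAt_window {x : ℕ → A} (hsys : SAdicSystem σ Aseq a)
    (hconv : ConvergesTo (fun k => chain σ 0 (k + 1) a) a x)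
    (hunb : ∀ B, ∃ k, B ≤ (chain σ 0 (k + 1) a).length) {N P : ℕ} (hP : 0 < P) {u : List A}
    (hpair : ∀ c ∈ Aseq N, ∀ c' ∈ Aseq N, u <:+: chain σ 0 N c ++ chain σ 0 N c')
    (hlen : ∀ b ∈ Aseq N, (chain σ 0 N b).length ≤ P) (i : ℕ) :
    ∃ j, i ≤ j ∧ j + u.length ≤ i + 3 * P ∧ OccursAt x u j := by
  obtain ⟨k, hk, hpre⟩ := hconv.exists_ge_seqTake_prefix hunb (i + 3 * P) N
  have hV : ∀ b ∈ chain σ N (k + 1 - N) a, b ∈ Aseq N := fun b hb =>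
    mem_of_mem_chain hsys.2 (hsys.1 _) hb
  have hdec : chain σ 0 (k + 1) a = (chain σ N (k + 1 - N) a).flatMap (chain σ 0 N) := by
    have := chain_add σ 0 N (k + 1 - N) a
    rwa [zero_add, Nat.add_sub_cancel' (by omega)] at this
  rw [hdec] at hpre
  obtain ⟨j, hij, hj, hpref⟩ := exists_prefix_drop_flatMap (chain σ 0 N) u hP
    (fun b hb => hlen b (hV b hb))
    (fun b hb b' hb' => hpair b (hV b hb) b' (hV b' hb')) (by simpa using hpre.length_le)
  exact ⟨j, hij, hj, (occursAt_iff_prefix_drop hpre (by omega)).2 hpref⟩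

theorem GeneratesSAdic.linearlySyndetic_of_unbounded [Finite A] {x : ℕ → A}
    (hgen : GeneratesSAdic σ Aseq a x) (hprim : PrimitiveWith σ Aseq s0)
    (hσ : ∀ n, ProperMorphism (σ n)) (hL : ∀ n b, (σ n b).length ≤ L)
    (hunb : ∀ B, ∃ k, B ≤ (chain σ 0 (k + 1) a).length) : ∃ K, LinearlySyndetic x K := by
  obtain ⟨hsys, hconv⟩ := hgen
  have hne : ∀ n b, σ n b ≠ [] := fun n => (hσ n).ne_nil
  have hL0 : 0 < L := (List.length_pos_of_ne_nil (hne 0 a)).trans_le (hL 0 a)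
  obtain ⟨n₀, hn₀⟩ := WellFoundedGT.monotone_chain_condition ⟨Aseq, hsys.monotone hprim⟩
  have hstab : ∀ r ≥ n₀, Aseq (r + 1) ⊆ Aseq r := fun r hr => by
    have h1 : Aseq n₀ = Aseq r := hn₀ r hr
    have h2 : Aseq n₀ = Aseq (r + 1) := hn₀ (r + 1) (by omega)
    rw [← h1, ← h2]
  refine ⟨3 * (L ^ (2 * s0 + 2) + L ^ (n₀ + 2 * s0 + 2)), fun u hu ⟨p, hp⟩ i => ?_⟩
  obtain ⟨m, hm, hshort, hbound⟩ := exists_level_length_bounds hsys hprim hL hL0 hunb hstab hu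
  obtain ⟨k, hk, hpre⟩ := hconv.exists_ge_seqTake_prefix hunb (p + u.length) m
  have hsub : u <:+: chain σ 0 (k + 1) a :=
    ((occursAt_iff_prefix_drop hpre le_rfl).1 hp).isInfix.trans (List.drop_suffix _ _).isInfix
  obtain ⟨j, hij, hj, hocc⟩ := exists_occursAt_window hsys hconv hunb
    (Nat.mul_pos (by positivity) (List.length_pos_of_ne_nil hu))
    (fun c hc c' _ => infix_chain_append_chain hsys hprim hσ (hstab m hm) hk hu hshort hsub hc c')
    hbound i
  exact ⟨j, hij, by rwa [mul_assoc], hocc⟩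

end SAdic

/-- A primitive S-adic sequence over a finite set of proper morphisms is linearly
recurrent, and consequently the subshift it generates is linearly recurrent. -/
theorem primitive_proper_sadic_imp_lr {A : Type*} [Fintype A]
    (S : Set (A → List A)) (hSfin : S.Finite) (hSproper : ∀ σ ∈ S, ProperMorphism σ)
    (σseq : ℕ → A → List A) (hmem : ∀ n, σseq n ∈ S)
    (Aseq : ℕ → Set A) (a : A) (x : ℕ → A) (s0 : ℕ)
    (hgen : GeneratesSAdic σseq Aseq a x)
    (hprim : PrimitiveWith σseq Aseq s0) :
    LinearlyRecurrent x ∧ IsLRSubshift (SubshiftGen x) := by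
  have hσ : ∀ n, ProperMorphism (σseq n) := fun n => hSproper _ (hmem n)
  obtain ⟨K, hK⟩ : ∃ K, LinearlySyndetic x K := by
    by_cases hunb : ∀ B, ∃ k, B ≤ (chain σseq 0 (k + 1) a).length
    · obtain ⟨L, hL⟩ := exists_length_le_of_finite hSfin
      exact hgen.linearlySyndetic_of_unbounded hprim hσ (fun n => hL _ (hmem n)) hunb
    · simp only [not_forall, not_exists, not_le] at hunb
      obtain ⟨B, hB⟩ := hunb
      obtain ⟨p, hp, hper⟩ := hgen.2.periodic_of_bounded
        (fun k => chain_ne_nil (fun n => (hσ n).ne_nil) _ _ _) hB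
      exact ⟨_, linearlySyndetic_of_periodic hp hper⟩
  exact ⟨⟨K, hK.linearlyRecurrentWith⟩, hK.linearlyRecurrentWith.isLRSubshift⟩

end DurandLR
end

section
/- For every z ∈ A^ℕ and every n ∈ ℕ, the difference between two successive occurrences of the word ca in σⁿτ(z) is at least 3^{n+1}. -/
namespace DurandLR

variable {A B : Type*}

/-! The morphism `σⁿτ` is uniform of length `3^{n+1}`, and no image `σⁿτ(b)` contains `ca`:
this holds for `τ`, and `σ` cannot create `ca`, since inside the blocks `acb`, `bab`, `cbc`
there is none and across two blocks it only arises as the end of `σ(c)` followed by the start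
of `σ(a)`. Hence every `ca` in `σⁿτ(z)` straddles two blocks, i.e. its `a` sits at a multiple
of `3^{n+1}`, and two distinct occurrences are at least one block length apart. -/

section Morphisms

variable {μ : A → List B} {L : ℕ}

lemma wordMap_cons (σ : A → List B) (b : A) (u : List A) :
    wordMap σ (b :: u) = σ b ++ wordMap σ u := rfl

lemma wordMap_append (σ : A → List B) (u v : List A) :
    wordMap σ (u ++ v) = wordMap σ u ++ wordMap σ v := by
  induction u with
  | nil => rfl
  | cons b u ih => simp [wordMap_cons, ih]

lemma wordMap_singleton (u : List A) : wordMap (fun b => [b]) u = u := by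
  induction u with
  | nil => rfl
  | cons b u ih => simp [wordMap_cons, ih]

lemma wordMap_compM (σ τ : A → List A) (u : List A) :
    wordMap (compM σ τ) u = wordMap σ (wordMap τ u) := by
  induction u with
  | nil => rfl
  | cons b u ih => simp [wordMap_cons, compM, ih, wordMap_append]

lemma length_wordMap_of_uniform (hμ : ∀ b, (μ b).length = L) (u : List A) :
    (wordMap μ u).length = L * u.length := by
  induction u with
  | nil => rfl
  | cons b u ih => simp [wordMap_cons, ih, hμ, Nat.mul_succ, Nat.add_comm]

lemma length_powM_of_uniform {σ : A → List A} (hσ : ∀ b, (σ b).length = L) (n : ℕ) (b : A) :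
    (powM σ n b).length = L ^ n := by
  induction n with
  | zero => rfl
  | succ n ih =>
    rw [powM, compM, length_wordMap_of_uniform hσ, ih, pow_succ, Nat.mul_comm]

lemma getElem?_wordMap_of_uniform (hL : 0 < L) (hμ : ∀ b, (μ b).length = L)
    (u : List A) (i : ℕ) :
    (wordMap μ u)[i]? = u[i / L]?.bind fun b => (μ b)[i % L]? := by
  induction u generalizing i with
  | nil => simp [wordMap]
  | cons b u ih =>
    rw [wordMap_cons]
    rcases lt_or_ge i L with hi | hi
    · rw [List.getElem?_append_left (by rwa [hμ]), Nat.div_eq_of_lt hi, Nat.mod_eq_of_lt hi]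
      rfl
    · rw [List.getElem?_append_right (by rwa [hμ]), hμ, ih, Nat.div_eq_sub_div hL hi,
        Nat.mod_eq_sub_mod hi]
      rfl

end Morphisms

def PairAt (w : List A) (p q : A) (i : ℕ) : Prop :=
  w[i]? = some p ∧ w[i + 1]? = some q

section UniformMorphism

variable {μ : A → List B} {L : ℕ} (hL : 0 < L) (hμ : ∀ b, (μ b).length = L)
include hL hμ

lemma dvd_succ_of_pairAt_wordMap {p q : B} (hfree : ∀ b k, ¬ PairAt (μ b) p q k)
    {u : List A} {i : ℕ} (h : PairAt (wordMap μ u) p q i) : L ∣ i + 1 := by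
  by_contra hdvd
  have hdiv : (i + 1) / L = i / L := Nat.succ_div_of_not_dvd hdvd
  have hmod : (i + 1) % L = i % L + 1 := by
    have := Nat.div_add_mod (i + 1) L
    have := Nat.div_add_mod i L
    rw [hdiv] at *
    omega
  obtain ⟨hp, hq⟩ := h
  rw [getElem?_wordMap_of_uniform hL hμ] at hp hq
  rw [hdiv, hmod] at hq
  obtain ⟨b, hb, hbp⟩ := Option.bind_eq_some_iff.mp hp
  obtain ⟨b', hb', hbq⟩ := Option.bind_eq_some_iff.mp hq
  obtain rfl : b = b' := Option.some_injective _ (hb.symm.trans hb')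
  exact hfree b (i % L) ⟨hbp, hbq⟩

lemma pairAt_of_pairAt_wordMap_of_dvd {p q : B} {u : List A} {i : ℕ} (hdvd : L ∣ i + 1)
    (h : PairAt (wordMap μ u) p q i) :
    ∃ b c, PairAt u b c (i / L) ∧ (μ b)[L - 1]? = some p ∧ (μ c)[0]? = some q := by
  have hmod : i % L = L - 1 := by
    have := Nat.div_add_mod (i + 1) L
    have := Nat.div_add_mod i L
    rw [Nat.succ_div_of_dvd hdvd, Nat.mod_eq_zero_of_dvd hdvd] at *
    have := Nat.mod_lt i hL
    rw [Nat.mul_succ] at *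
    omega
  obtain ⟨hp, hq⟩ := h
  rw [getElem?_wordMap_of_uniform hL hμ] at hp hq
  rw [Nat.succ_div_of_dvd hdvd, Nat.mod_eq_zero_of_dvd hdvd] at hq
  rw [hmod] at hp
  obtain ⟨b, hb, hbp⟩ := Option.bind_eq_some_iff.mp hp
  obtain ⟨c, hc, hcq⟩ := Option.bind_eq_some_iff.mp hq
  exact ⟨b, c, ⟨hb, hc⟩, hbp, hcq⟩

end UniformMorphism

lemma getElem?_wordMap_seqTake {μ : A → List B} {z : ℕ → A} {y : ℕ → B}
    (h : IsSeqImage μ z y) {N k : ℕ} (hk : k < (wordMap μ (seqTake z N)).length) :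
    (wordMap μ (seqTake z N))[k]? = some (y k) := by
  rw [← h N, seqTake, List.getElem?_map, List.getElem?_range hk]
  rfl

lemma dvd_succ_of_occursAt_of_isSeqImage {μ : A → List B} {L : ℕ} (hL : 0 < L)
    (hμ : ∀ b, (μ b).length = L) {p q : B} (hfree : ∀ b k, ¬ PairAt (μ b) p q k)
    {z : ℕ → A} {y : ℕ → B} (h : IsSeqImage μ z y) {i : ℕ} (hocc : OccursAt y [p, q] i) :
    L ∣ i + 1 := by
  have hlen : i + 1 < (wordMap μ (seqTake z (i + 2))).length := by
    rw [length_wordMap_of_uniform hμ]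
    simp only [seqTake, List.length_map, List.length_range]
    nlinarith
  refine dvd_succ_of_pairAt_wordMap hL hμ hfree (u := seqTake z (i + 2)) ⟨?_, ?_⟩
  · rw [getElem?_wordMap_seqTake h (by omega)]
    simpa using hocc ⟨0, by simp⟩
  · rw [getElem?_wordMap_seqTake h hlen]
    simpa using hocc ⟨1, by simp⟩

lemma length_sigma3 (b : Fin 3) : (sigma3 b).length = 3 := by
  fin_cases b <;> rfl

lemma not_pairAt_sigma3 (b : Fin 3) (k : ℕ) : ¬ PairAt (sigma3 b) 2 0 k := by
  fin_cases b <;> rcases k with _ | _ | _ | k <;> simp [PairAt, sigma3]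

lemma not_pairAt_wordMap_sigma3 {w : List (Fin 3)} (hw : ∀ k, ¬ PairAt w 2 0 k) (i : ℕ) :
    ¬ PairAt (wordMap sigma3 w) 2 0 i := by
  intro h
  have hdvd : 3 ∣ i + 1 := dvd_succ_of_pairAt_wordMap (by norm_num) length_sigma3
    not_pairAt_sigma3 h
  obtain ⟨b, c, hbc, hb, hc⟩ := pairAt_of_pairAt_wordMap_of_dvd (by norm_num) length_sigma3 hdvd h
  have hb2 : b = 2 := by fin_cases b <;> simp_all [sigma3]
  have hc0 : c = 0 := by fin_cases c <;> simp_all [sigma3]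
  exact hw _ (hb2 ▸ hc0 ▸ hbc)

lemma not_pairAt_sigma3_pow_tau3 (n : ℕ) (b : Fin 3) (k : ℕ) :
    ¬ PairAt (compM (powM sigma3 n) tau3 b) 2 0 k := by
  induction n generalizing k with
  | zero =>
    rw [compM, powM, wordMap_singleton]
    fin_cases b <;> rcases k with _ | _ | _ | k <;> simp [PairAt, tau3]
  | succ n ih =>
    rw [compM, powM, wordMap_compM]
    exact not_pairAt_wordMap_sigma3 ih k

lemma length_sigma3_pow_tau3 (n : ℕ) (b : Fin 3) :
    (compM (powM sigma3 n) tau3 b).length = 3 ^ (n + 1) := by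
  rw [compM, length_wordMap_of_uniform (length_powM_of_uniform length_sigma3 n), pow_succ]
  fin_cases b <;> rfl

/-- In `σⁿτ(z)`, the difference between two successive occurrences of the word
`ca` (= `[2,0]`) is at least `3^{n+1}`. -/
theorem gap_of_ca_in_sigma_tau (z y : ℕ → Fin 3) (n : ℕ)
    (h : IsSeqImage (compM (powM sigma3 n) tau3) z y) :
    ∀ i j : ℕ, OccursAt y [2, 0] i → OccursAt y [2, 0] j → i < j →
      (∀ k, i < k → k < j → ¬ OccursAt y [2, 0] k) → 3 ^ (n + 1) ≤ j - i := by
  intro i j hi hj hij _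
  have hdvd (k : ℕ) (hk : OccursAt y [2, 0] k) : 3 ^ (n + 1) ∣ k + 1 :=
    dvd_succ_of_occursAt_of_isSeqImage (by positivity) (length_sigma3_pow_tau3 n)
      (not_pairAt_sigma3_pow_tau3 n) h hk
  have hgap : 3 ^ (n + 1) ∣ j - i := by
    simpa [show j + 1 - (i + 1) = j - i by omega] using Nat.dvd_sub (hdvd j hj) (hdvd i hi)
  exact Nat.le_of_dvd (by omega) hgap

end DurandLR
end
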